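/- For a diffeomorphism φ of ℝⁿ define recursively γ^i_{jk,ℓ₁…ℓ_r}(φ) := X_{ℓ_r}( γ^i_{jk,ℓ₁…ℓ_{r−1}}(φ) ), starting from γ^i_{jk}(φ), where X_ℓ f(x,y) = Σ_μ y^μ_ℓ ∂f/∂x^μ. Then for every invertible affine transformation φ_aff of ℝⁿ, every diffeomorphism φ of ℝⁿ, all indices and all r ≥ 0: (i) γ^i_{jk,ℓ₁…ℓ_r}(φ_aff ∘ φ) = γ^i_{jk,ℓ₁…ℓ_r}(φ) as functions on ℝⁿ × GL(n,ℝ); (ii) γ^i_{jk,ℓ₁…ℓ_r}(φ ∘ φ_aff) = γ^i_{jk,ℓ₁…ℓ_r}(φ) ∘ φ̃_aff, where φ̃_aff(x,y) = (φ_aff(x), φ_aff'(x)·y). -/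

import Mathlib

noncomputable section

/-- A `C^∞` diffeomorphism of `ℝⁿ` (a bijective `C^∞` map with `C^∞` inverse). -/
structure Diffeo (n : ℕ) where
  toFun : (Fin n → ℝ) → (Fin n → ℝ)
  invFun : (Fin n → ℝ) → (Fin n → ℝ)
  left_inv : Function.LeftInverse invFun toFun
  right_inv : Function.RightInverse invFun toFun
  smooth_toFun : ContDiff ℝ (⊤ : ℕ∞) toFun
  smooth_invFun : ContDiff ℝ (⊤ : ℕ∞) invFun

/-- Membership in the group `G` of invertible affine transformations of `ℝⁿ`:
maps `x ↦ A·x + b` with `A ∈ GL(n,ℝ)`, `b ∈ ℝⁿ`. -/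
def IsAffineMap (n : ℕ) (f : (Fin n → ℝ) → (Fin n → ℝ)) : Prop :=
  ∃ A : Matrix (Fin n) (Fin n) ℝ, IsUnit A ∧ ∃ b : Fin n → ℝ, ∀ x, f x = A.mulVec x + b

/-- Membership in the group `N` of diffeomorphisms `ψ` with `ψ(0) = 0` and `Dψ(0) = Id`. -/
def InN (n : ℕ) (ψ : Diffeo n) : Prop :=
  ψ.toFun 0 = 0 ∧ fderiv ℝ ψ.toFun 0 = ContinuousLinearMap.id ℝ (Fin n → ℝ)

/-- The Jacobian matrix of `f` at `x`: entry `(i,j)` is `∂ⱼ f^i (x)`. -/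
def jacobianM (n : ℕ) (f : (Fin n → ℝ) → (Fin n → ℝ)) (x : Fin n → ℝ) :
    Matrix (Fin n) (Fin n) ℝ :=
  Matrix.of fun i j => fderiv ℝ f x (Pi.single j 1) i

/-- The second-order partial derivative `∂ⱼ∂ₖ f^i (x)`. -/
def secondPartial (n : ℕ) (f : (Fin n → ℝ) → (Fin n → ℝ)) (i j k : Fin n)
    (x : Fin n → ℝ) : ℝ :=
  fderiv ℝ (fun z => fderiv ℝ f z (Pi.single k 1) i) x (Pi.single j 1)

/-- The cocycle `γ^i_{jk}(f)(x,y) = Σ (y⁻¹)^i_λ (f'(x)⁻¹)^λ_ρ ∂_μ∂_ν f^ρ(x) y^ν_j y^μ_k`. -/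
def gammaFn (n : ℕ) (f : (Fin n → ℝ) → (Fin n → ℝ)) (i j k : Fin n)
    (x : Fin n → ℝ) (y : Fin n → Fin n → ℝ) : ℝ :=
  ∑ lam : Fin n, ∑ ρ : Fin n, ∑ μ : Fin n, ∑ ν : Fin n,
    (Matrix.of y)⁻¹ i lam * (jacobianM n f x)⁻¹ lam ρ
      * secondPartial n f ρ μ ν x * y ν j * y μ k

/-- The horizontal derivative operator `X_ℓ f(x,y) = Σ_μ y^μ_ℓ ∂f/∂x^μ (x,y)`. -/
def Xop (n : ℕ) (ℓ : Fin n) (f : (Fin n → ℝ) → (Fin n → Fin n → ℝ) → ℝ) :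
    (Fin n → ℝ) → (Fin n → Fin n → ℝ) → ℝ :=
  fun x y => ∑ μ : Fin n, y μ ℓ * fderiv ℝ (fun x' => f x' y) x (Pi.single μ 1)

/-- The higher cocycles `γ^i_{jk,ℓ₁…ℓ_r}(φ) := X_{ℓ_r}(⋯ X_{ℓ₁}(γ^i_{jk}(φ)) ⋯)`,
indexed by a list of horizontal derivative directions. -/
def gammaIter (n : ℕ) (f : (Fin n → ℝ) → (Fin n → ℝ)) (i j k : Fin n) :
    List (Fin n) → (Fin n → ℝ) → (Fin n → Fin n → ℝ) → ℝ
  | [] => fun x y => gammaFn n f i j k x y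
  | ℓ :: rest => Xop n ℓ (gammaIter n f i j k rest)


/-! Writing `γ(f)(x, y) = (y⁻¹ f'(x)⁻¹ D²f(x)(y e_k, y e_j))^i`, the chain rule gives
`(A f + b)' = A f'` and `D²(A f + b) = A D²f`, so the two factors `A` cancel; and
`(f ∘ aff)'(x) = f'(ax) A`, `D²(f ∘ aff)(x)(u, v) = D²f(ax)(A u, A v)`, which is `γ(f)` at the
point `ax` and the frame `A y`. Since `X_ℓ` differentiates along the `ℓ`-th column of `y`, which
the chain rule carries to the `ℓ`-th column of `A y` at `ax`, both laws pass to all higher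
cocycles by induction on the list of directions. -/

lemma ContDiff.differentiable_fderiv {𝕜 E F : Type*} [NontriviallyNormedField 𝕜]
    [NormedAddCommGroup E] [NormedSpace 𝕜 E] [NormedAddCommGroup F] [NormedSpace 𝕜 F]
    {f : E → F} {m : WithTop ℕ∞} (hf : ContDiff 𝕜 m f) (hm : 2 ≤ m) :
    Differentiable 𝕜 (fderiv 𝕜 f) :=
  (hf.fderiv_right (m := 1) (by simpa [one_add_one_eq_two] using hm)).differentiable one_ne_zero

section AffineCocycle

open Matrix

variable {n : ℕ}

lemma clm_apply_eq_sum_single {F : Type*} [AddCommGroup F] [Module ℝ F] [TopologicalSpace F]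
    (L : (Fin n → ℝ) →L[ℝ] F) (v : Fin n → ℝ) :
    L v = ∑ μ, v μ • L (Pi.single μ 1) := by
  conv_lhs => rw [pi_eq_sum_univ' v]
  simp only [map_sum, map_smul]

lemma Xop_eq_fderiv (ℓ : Fin n) (g : (Fin n → ℝ) → (Fin n → Fin n → ℝ) → ℝ)
    (x : Fin n → ℝ) (y : Fin n → Fin n → ℝ) :
    Xop n ℓ g x y = fderiv ℝ (fun x' => g x' y) x (fun μ => y μ ℓ) := by
  rw [clm_apply_eq_sum_single]
  rfl

lemma jacobianM_eq_toMatrix' (f : (Fin n → ℝ) → (Fin n → ℝ)) (x : Fin n → ℝ) :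
    jacobianM n f x = LinearMap.toMatrix' (fderiv ℝ f x : (Fin n → ℝ) →ₗ[ℝ] (Fin n → ℝ)) := by
  ext i j
  simp [jacobianM, LinearMap.toMatrix'_apply]

section SecondDerivative

variable {f : (Fin n → ℝ) → (Fin n → ℝ)} {x : Fin n → ℝ}
  (hf : DifferentiableAt ℝ (fderiv ℝ f) x)
include hf

lemma secondPartial_eq_fderiv_fderiv (ρ μ ν : Fin n) :
    secondPartial n f ρ μ ν x = fderiv ℝ (fderiv ℝ f) x (Pi.single μ 1) (Pi.single ν 1) ρ := by
  rw [secondPartial, fderiv_apply (hf.clm_apply (differentiableAt_const _)),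
    fderiv_clm_apply hf (differentiableAt_const _)]
  simp

lemma fderiv_fderiv_apply_eq_sum (u v : Fin n → ℝ) (ρ : Fin n) :
    fderiv ℝ (fderiv ℝ f) x u v ρ = ∑ μ, ∑ ν, secondPartial n f ρ μ ν x * v ν * u μ := by
  rw [clm_apply_eq_sum_single _ u]
  simp only [FunLike.coe_sum, FunLike.coe_smul, Finset.sum_apply, Pi.smul_apply, smul_eq_mul,
    secondPartial_eq_fderiv_fderiv hf]
  refine Finset.sum_congr rfl fun μ _ => ?_
  rw [clm_apply_eq_sum_single (fderiv ℝ (fderiv ℝ f) x (Pi.single μ 1)) v]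
  simp [Finset.sum_apply, Finset.mul_sum, mul_comm]

lemma gammaFn_eq_mulVec (i j k : Fin n) (y : Fin n → Fin n → ℝ) :
    gammaFn n f i j k x y = ((of y)⁻¹ *ᵥ (jacobianM n f x)⁻¹ *ᵥ
      fderiv ℝ (fderiv ℝ f) x (fun μ => y μ k) (fun ν => y ν j)) i := by
  simp only [gammaFn, mulVec, dotProduct, fderiv_fderiv_apply_eq_sum hf, Finset.mul_sum,
    mul_assoc]

end SecondDerivative

def mulVecCLM (A : Matrix (Fin n) (Fin n) ℝ) : (Fin n → ℝ) →L[ℝ] (Fin n → ℝ) :=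
  LinearMap.toContinuousLinearMap A.mulVecLin

lemma toMatrix'_mulVecCLM (A : Matrix (Fin n) (Fin n) ℝ) :
    LinearMap.toMatrix' (mulVecCLM A : (Fin n → ℝ) →ₗ[ℝ] (Fin n → ℝ)) = A :=
  LinearMap.toMatrix'_toLin' A

section Affine

variable (A : Matrix (Fin n) (Fin n) ℝ) (b : Fin n → ℝ) {f : (Fin n → ℝ) → (Fin n → ℝ)}
  {F : Type*} [NormedAddCommGroup F] [NormedSpace ℝ F]

lemma hasFDerivAt_mulVec_add_const (x : Fin n → ℝ) :
    HasFDerivAt (fun z => A *ᵥ z + b) (mulVecCLM A) x :=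
  (mulVecCLM A).hasFDerivAt.add_const b

lemma fderiv_mulVec_comp_add_const {x : Fin n → ℝ} (hf : DifferentiableAt ℝ f x) :
    fderiv ℝ (fun z => A *ᵥ f z + b) x = (mulVecCLM A).comp (fderiv ℝ f x) :=
  (((mulVecCLM A).hasFDerivAt.comp x hf.hasFDerivAt).add_const b).fderiv

lemma fderiv_comp_mulVec_add_const {u : (Fin n → ℝ) → F} {x : Fin n → ℝ}
    (hu : DifferentiableAt ℝ u (A *ᵥ x + b)) :
    fderiv ℝ (fun z => u (A *ᵥ z + b)) x = (fderiv ℝ u (A *ᵥ x + b)).comp (mulVecCLM A) :=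
  (hu.hasFDerivAt.comp x (hasFDerivAt_mulVec_add_const A b x)).fderiv

-- No differentiability is needed: an invertible affine map is a diffeomorphism, so both sides
-- are the junk value `0` at the same points.
variable {A} in
lemma fderiv_comp_mulVec_add_const_of_isUnit (hA : IsUnit A) (u : (Fin n → ℝ) → F)
    (x : Fin n → ℝ) :
    fderiv ℝ (fun z => u (A *ᵥ z + b)) x = (fderiv ℝ u (A *ᵥ x + b)).comp (mulVecCLM A) := by
  let e := (A.toLinearEquiv' hA.invertible).toContinuousLinearEquiv
  change fderiv ℝ ((fun w => u (w + b)) ∘ e) x = _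
  rw [e.comp_right_fderiv, fderiv_comp_add_right]
  rfl

lemma jacobianM_mulVec_comp_add_const {x : Fin n → ℝ} (hf : DifferentiableAt ℝ f x) :
    jacobianM n (fun z => A *ᵥ f z + b) x = A * jacobianM n f x := by
  rw [jacobianM_eq_toMatrix', jacobianM_eq_toMatrix', fderiv_mulVec_comp_add_const A b hf,
    ContinuousLinearMap.toLinearMap_comp, LinearMap.toMatrix'_comp, toMatrix'_mulVecCLM]

lemma jacobianM_comp_mulVec_add_const {x : Fin n → ℝ}
    (hf : DifferentiableAt ℝ f (A *ᵥ x + b)) :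
    jacobianM n (fun z => f (A *ᵥ z + b)) x = jacobianM n f (A *ᵥ x + b) * A := by
  rw [jacobianM_eq_toMatrix', jacobianM_eq_toMatrix', fderiv_comp_mulVec_add_const A b hf,
    ContinuousLinearMap.toLinearMap_comp, LinearMap.toMatrix'_comp, toMatrix'_mulVecCLM]

lemma fderiv_fderiv_mulVec_comp_add_const (hf : ContDiff ℝ 2 f) (x u v : Fin n → ℝ) :
    fderiv ℝ (fderiv ℝ (fun z => A *ᵥ f z + b)) x u v = A *ᵥ fderiv ℝ (fderiv ℝ f) x u v := by
  have hfderiv : fderiv ℝ (fun z => A *ᵥ f z + b) =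
      fun z => ContinuousLinearMap.compL ℝ _ _ _ (mulVecCLM A) (fderiv ℝ f z) :=
    funext fun z => fderiv_mulVec_comp_add_const A b (hf.differentiable two_ne_zero z)
  rw [hfderiv, fderiv_fun_comp _ (ContinuousLinearMap.differentiableAt _)
    (hf.differentiable_fderiv le_rfl x), ContinuousLinearMap.fderiv]
  rfl

lemma fderiv_fderiv_comp_mulVec_add_const (hf : ContDiff ℝ 2 f) (x u v : Fin n → ℝ) :
    fderiv ℝ (fderiv ℝ (fun z => f (A *ᵥ z + b))) x u v
      = fderiv ℝ (fderiv ℝ f) (A *ᵥ x + b) (A *ᵥ u) (A *ᵥ v) := by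
  have hDf := hf.differentiable_fderiv le_rfl
  have hfderiv : fderiv ℝ (fun z => f (A *ᵥ z + b)) =
      fun z => (ContinuousLinearMap.compL ℝ _ _ _).flip (mulVecCLM A) (fderiv ℝ f (A *ᵥ z + b)) :=
    funext fun z => fderiv_comp_mulVec_add_const A b (hf.differentiable two_ne_zero _)
  have hDf_affine : DifferentiableAt ℝ (fun z => fderiv ℝ f (A *ᵥ z + b)) x :=
    (hDf _).comp x (hasFDerivAt_mulVec_add_const A b x).differentiableAt
  rw [hfderiv, fderiv_fun_comp _ (ContinuousLinearMap.differentiableAt _) hDf_affine,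
    ContinuousLinearMap.fderiv, fderiv_comp_mulVec_add_const A b (hDf _)]
  rfl

variable {A} in
lemma gammaFn_mulVec_comp_add_const (hA : IsUnit A) (hf : ContDiff ℝ 2 f)
    (i j k : Fin n) (x : Fin n → ℝ) (y : Fin n → Fin n → ℝ) :
    gammaFn n (fun z => A *ᵥ f z + b) i j k x y = gammaFn n f i j k x y := by
  have hAf : ContDiff ℝ 2 (fun z => A *ᵥ f z + b) :=
    ((mulVecCLM A).contDiff.comp hf).add contDiff_const
  rw [gammaFn_eq_mulVec (hAf.differentiable_fderiv le_rfl x),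
    gammaFn_eq_mulVec (hf.differentiable_fderiv le_rfl x),
    jacobianM_mulVec_comp_add_const A b (hf.differentiable two_ne_zero x), Matrix.mul_inv_rev]
  simp only [fderiv_fderiv_mulVec_comp_add_const A b hf, mulVec_mulVec, Matrix.mul_assoc,
    nonsing_inv_mul A ((isUnit_iff_isUnit_det A).mp hA), Matrix.mul_one]

lemma gammaFn_comp_mulVec_add_const (hf : ContDiff ℝ 2 f)
    (i j k : Fin n) (x : Fin n → ℝ) (y : Fin n → Fin n → ℝ) :
    gammaFn n (fun z => f (A *ᵥ z + b)) i j k x y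
      = gammaFn n f i j k (A *ᵥ x + b) (of.symm (A * of y)) := by
  have hfA : ContDiff ℝ 2 (fun z => f (A *ᵥ z + b)) :=
    hf.comp ((mulVecCLM A).contDiff.add contDiff_const)
  have hcol : ∀ c, (fun μ => of.symm (A * of y) μ c) = A *ᵥ fun μ => y μ c := fun _ => rfl
  rw [gammaFn_eq_mulVec (hfA.differentiable_fderiv le_rfl x),
    gammaFn_eq_mulVec (hf.differentiable_fderiv le_rfl _),
    jacobianM_comp_mulVec_add_const A b (hf.differentiable two_ne_zero _),
    fderiv_fderiv_comp_mulVec_add_const A b hf]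
  simp only [Equiv.apply_symm_apply, hcol, Matrix.mul_inv_rev, mulVec_mulVec, Matrix.mul_assoc]

variable {A} in
lemma Xop_comp_mulVec_add_const (hA : IsUnit A) (ℓ : Fin n)
    (g : (Fin n → ℝ) → (Fin n → Fin n → ℝ) → ℝ) (x : Fin n → ℝ) (y : Fin n → Fin n → ℝ) :
    Xop n ℓ (fun x' y' => g (A *ᵥ x' + b) (of.symm (A * of y'))) x y
      = Xop n ℓ g (A *ᵥ x + b) (of.symm (A * of y)) := by
  rw [Xop_eq_fderiv, Xop_eq_fderiv,
    fderiv_comp_mulVec_add_const_of_isUnit b hA (fun w => g w (of.symm (A * of y)))]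
  rfl

variable {A} (hA : IsUnit A) (hf : ContDiff ℝ 2 f) (i j k : Fin n)
include hA hf

lemma gammaIter_mulVec_comp_add_const (ℓs : List (Fin n)) :
    gammaIter n (fun z => A *ᵥ f z + b) i j k ℓs = gammaIter n f i j k ℓs := by
  induction ℓs with
  | nil => funext x y; exact gammaFn_mulVec_comp_add_const b hA hf i j k x y
  | cons ℓ ℓs ih => rw [gammaIter, gammaIter, ih]

lemma gammaIter_comp_mulVec_add_const (ℓs : List (Fin n)) :
    gammaIter n (fun z => f (A *ᵥ z + b)) i j k ℓs
      = fun x y => gammaIter n f i j k ℓs (A *ᵥ x + b) (of.symm (A * of y)) := by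
  induction ℓs with
  | nil => funext x y; exact gammaFn_comp_mulVec_add_const A b hf i j k x y
  | cons ℓ ℓs ih =>
    funext x y
    rw [gammaIter, ih]
    exact Xop_comp_mulVec_add_const b hA ℓ _ x y

end Affine

end AffineCocycle

theorem stmt11_general (n : ℕ) (A : Matrix (Fin n) (Fin n) ℝ) (hA : IsUnit A)
    (b : Fin n → ℝ) (φ : Diffeo n) (i j k : Fin n) (ℓs : List (Fin n))
    (x : Fin n → ℝ) (y : Fin n → Fin n → ℝ) :
    gammaIter n ((fun z => A.mulVec z + b) ∘ φ.toFun) i j k ℓs x y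
        = gammaIter n φ.toFun i j k ℓs x y ∧
    gammaIter n (φ.toFun ∘ (fun z => A.mulVec z + b)) i j k ℓs x y
        = gammaIter n φ.toFun i j k ℓs (A.mulVec x + b)
            (fun a c => ∑ d : Fin n, A a d * y d c) := by
  have hφ : ContDiff ℝ 2 φ.toFun := φ.smooth_toFun.of_le (WithTop.coe_le_coe.mpr le_top)
  exact ⟨congr_fun₂ (gammaIter_mulVec_comp_add_const b hA hφ i j k ℓs) x y,
    congr_fun₂ (gammaIter_comp_mulVec_add_const b hA hφ i j k ℓs) x y⟩

/-- The higher cocycles are invariant under left composition with affine maps, and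
transform under right composition with an affine map by the prolonged action:
`γ_{…}(φ_aff ∘ φ) = γ_{…}(φ)` and `γ_{…}(φ ∘ φ_aff) = γ_{…}(φ) ∘ φ̃_aff`. -/
theorem stmt11 (n : ℕ) (A : Matrix (Fin n) (Fin n) ℝ) (hA : IsUnit A)
    (b : Fin n → ℝ) (φ : Diffeo n) (i j k : Fin n) (ℓs : List (Fin n))
    (x : Fin n → ℝ) (y : Fin n → Fin n → ℝ) (hy : IsUnit (Matrix.of y)) :
    gammaIter n ((fun z => A.mulVec z + b) ∘ φ.toFun) i j k ℓs x y
        = gammaIter n φ.toFun i j k ℓs x y ∧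
    gammaIter n (φ.toFun ∘ (fun z => A.mulVec z + b)) i j k ℓs x y
        = gammaIter n φ.toFun i j k ℓs (A.mulVec x + b)
            (fun a c => ∑ d : Fin n, A a d * y d c) :=
  stmt11_general n A hA b φ i j k ℓs x y
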